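/- arXiv:1402.3003 — 2 statements merged into one kernel-verified Lean document; each statement's English description precedes it below -/
import Mathlib

section
/- Let N ≥ 2 and R > 0. Then there exists a constant κ > 0, depending only on N and R, such that for every f ∈ L¹(ℝ^N) with support contained in the closed ball of radius R centered at 0, and every x ∈ ℝ^N with |x| ≥ 2R: | ∫_{B_R} ( e^{i|x-y|}·|x-y|^{-(N-1)/2} − e^{i(|x| - x̂·y)}·|x|^{-(N-1)/2} ) f(y) dy | ≤ κ·‖f‖_{L¹(ℝ^N)}·|x|^{-(N+1)/2}. -/
open MeasureTheory Filter Metric Complex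
open scoped Real RealInnerProductSpace ENNReal Topology

/-!
Write `a = |x - y|`, `b = |x| - x̂·y` and `α = (N - 1)/2`. Both `t ↦ e^{it}` and (on `[|x|/2, ∞)`)
`t ↦ t^{-α}` are Lipschitz, with constants `1` and `α (|x|/2)^{-α-1}`, so the kernel difference is
at most `|a^{-α} - |x|^{-α}| + |a - b| |x|^{-α}`. Here `|a - |x|| ≤ |y|`, and the phase error is
quadratic: `a² - b² = |y|² - (x̂·y)²` while `a + b ≥ |x|`, so `|a - b| ≤ |y|²/|x|`. This gives a
pointwise bound `O(|x|^{-α-1})` uniform in `y ∈ B_R`, which is integrated against `|f|`.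
-/

theorem norm_exp_I_mul_sub_exp_I_mul_le (a b : ℝ) :
    ‖exp (I * a) - exp (I * b)‖ ≤ |a - b| := by
  have hfactor : exp (I * a) - exp (I * b) = exp (I * b) * (exp (I * (a - b : ℝ)) - 1) := by
    rw [mul_sub, ← exp_add]
    push_cast
    ring_nf
  rw [hfactor, norm_mul, norm_exp_I_mul_ofReal, one_mul, ← Real.norm_eq_abs]
  exact Real.norm_exp_I_mul_ofReal_sub_one_le

theorem norm_exp_I_mul_mul_sub_exp_I_mul_mul_le (a b u v : ℝ) :
    ‖exp (I * a) * u - exp (I * b) * v‖ ≤ |u - v| + |a - b| * |v| := by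
  calc ‖exp (I * a) * u - exp (I * b) * v‖
      = ‖exp (I * a) * ((u - v : ℝ) : ℂ) + (exp (I * a) - exp (I * b)) * v‖ := by
        push_cast; ring_nf
    _ ≤ ‖exp (I * a) * ((u - v : ℝ) : ℂ)‖ + ‖(exp (I * a) - exp (I * b)) * v‖ := norm_add_le _ _
    _ ≤ |u - v| + |a - b| * |v| := by
        rw [norm_mul, norm_mul, norm_exp_I_mul_ofReal, one_mul, norm_real, norm_real,
          Real.norm_eq_abs, Real.norm_eq_abs]
        gcongr
        exact norm_exp_I_mul_sub_exp_I_mul_le a b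

theorem abs_rpow_neg_sub_rpow_neg_le {m α a b : ℝ} (hm : 0 < m) (hα : 0 ≤ α)
    (ha : m ≤ a) (hb : m ≤ b) :
    |a ^ (-α) - b ^ (-α)| ≤ α * m ^ (-α - 1) * |a - b| := by
  have hderiv : ∀ t ∈ Set.Ici m, HasDerivWithinAt (fun t : ℝ => t ^ (-α))
      (-α * t ^ (-α - 1)) (Set.Ici m) t := fun t ht =>
    (Real.hasDerivAt_rpow_const (Or.inl (hm.trans_le ht).ne')).hasDerivWithinAt
  have hderiv_le : ∀ t ∈ Set.Ici m, ‖-α * t ^ (-α - 1)‖ ≤ α * m ^ (-α - 1) := fun t ht => by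
    have ht0 : 0 < t := hm.trans_le ht
    rw [norm_mul, norm_neg, Real.norm_of_nonneg hα, Real.norm_of_nonneg (Real.rpow_nonneg ht0.le _)]
    exact mul_le_mul_of_nonneg_left (Real.rpow_le_rpow_of_nonpos hm ht (by linarith)) hα
  simpa only [Real.norm_eq_abs] using
    (convex_Ici m).norm_image_sub_le_of_norm_hasDerivWithin_le hderiv hderiv_le hb ha

section InnerProductSpace

variable {E : Type*} [NormedAddCommGroup E] [InnerProductSpace ℝ E]

theorem abs_inner_inv_norm_smul_le (x y : E) : |⟪‖x‖⁻¹ • x, y⟫| ≤ ‖y‖ := by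
  refine (abs_real_inner_le_norm _ _).trans (mul_le_of_le_one_left (norm_nonneg y) ?_)
  rw [norm_smul, norm_inv, norm_norm]
  exact inv_mul_le_one

theorem abs_norm_sub_sub_inner_le {x y : E} (hx : x ≠ 0) (hy : 2 * ‖y‖ ≤ ‖x‖) :
    |‖x - y‖ - (‖x‖ - ⟪‖x‖⁻¹ • x, y⟫)| ≤ ‖y‖ ^ 2 / ‖x‖ := by
  have hc : 0 < ‖x‖ := norm_pos_iff.mpr hx
  have hct : ‖x‖ * ⟪‖x‖⁻¹ • x, y⟫ = ⟪x, y⟫ := by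
    rw [real_inner_smul_left, ← mul_assoc, mul_inv_cancel₀ hc.ne', one_mul]
  have ht : |⟪‖x‖⁻¹ • x, y⟫| ≤ ‖y‖ := abs_inner_inv_norm_smul_le x y
  set c := ‖x‖
  set t := ⟪‖x‖⁻¹ • x, y⟫
  have hsq : ‖x - y‖ ^ 2 - (c - t) ^ 2 = ‖y‖ ^ 2 - t ^ 2 := by
    rw [norm_sub_sq_real, ← hct]; ring
  have hsum : c ≤ ‖x - y‖ + (c - t) := by
    linarith [norm_sub_norm_le x y, (abs_le.mp ht).2]
  have hdiff : |‖x - y‖ ^ 2 - (c - t) ^ 2| ≤ ‖y‖ ^ 2 := by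
    rw [hsq, abs_of_nonneg (by nlinarith [sq_abs t, abs_nonneg t])]
    nlinarith
  rw [le_div_iff₀ hc]
  calc |‖x - y‖ - (c - t)| * c ≤ |‖x - y‖ - (c - t)| * (‖x - y‖ + (c - t)) := by gcongr
    _ = |‖x - y‖ ^ 2 - (c - t) ^ 2| := by
        rw [← abs_of_pos (hc.trans_le hsum), ← abs_mul]; ring_nf
    _ ≤ ‖y‖ ^ 2 := hdiff

theorem norm_exp_mul_rpow_sub_exp_mul_rpow_le {α : ℝ} (hα : 0 ≤ α) {x y : E} (hx : x ≠ 0)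
    (hy : 2 * ‖y‖ ≤ ‖x‖) :
    ‖exp (I * (‖x - y‖ : ℝ)) * ((‖x - y‖ ^ (-α) : ℝ) : ℂ) -
        exp (I * ((‖x‖ - ⟪‖x‖⁻¹ • x, y⟫ : ℝ) : ℂ)) * ((‖x‖ ^ (-α) : ℝ) : ℂ)‖
      ≤ (α * 2 ^ (α + 1) * ‖y‖ + ‖y‖ ^ 2) * ‖x‖ ^ (-α - 1) := by
  have hc : 0 < ‖x‖ := norm_pos_iff.mpr hx
  have hamplitude : |‖x - y‖ ^ (-α) - ‖x‖ ^ (-α)| ≤ α * (‖x‖ / 2) ^ (-α - 1) * ‖y‖ := by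
    have hxy : ‖x‖ / 2 ≤ ‖x - y‖ := by linarith [norm_sub_norm_le x y]
    refine (abs_rpow_neg_sub_rpow_neg_le (by positivity) hα hxy (by linarith)).trans ?_
    gcongr
    simpa using abs_norm_sub_norm_le (x - y) x
  have hphase := abs_norm_sub_sub_inner_le hx hy
  have hhalf : (‖x‖ / 2) ^ (-α - 1) = 2 ^ (α + 1) * ‖x‖ ^ (-α - 1) := by
    rw [Real.div_rpow hc.le zero_le_two, div_eq_mul_inv, ← Real.rpow_neg zero_le_two]
    ring_nf
  have hpow : ‖x‖ ^ (-α) = ‖x‖ * ‖x‖ ^ (-α - 1) := by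
    rw [Real.rpow_sub hc, Real.rpow_one]; field_simp
  refine (norm_exp_I_mul_mul_sub_exp_I_mul_mul_le _ _ _ _).trans ?_
  rw [abs_of_pos (by positivity : 0 < ‖x‖ ^ (-α))]
  calc _ ≤ α * (‖x‖ / 2) ^ (-α - 1) * ‖y‖ + ‖y‖ ^ 2 / ‖x‖ * ‖x‖ ^ (-α) := by gcongr
    _ = _ := by rw [hhalf, hpow]; field_simp

end InnerProductSpace

theorem norm_setIntegral_mul_le_of_norm_le {X 𝕜 : Type*} [MeasurableSpace X] [RCLike 𝕜]
    {μ : Measure X} {s : Set X} {g f : X → 𝕜} {C : ℝ} (hf : Integrable f μ)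
    (hs : MeasurableSet s) (hC : 0 ≤ C) (hg : ∀ y ∈ s, ‖g y‖ ≤ C) :
    ‖∫ y in s, g y * f y ∂μ‖ ≤ C * ∫ y, ‖f y‖ ∂μ := by
  calc ‖∫ y in s, g y * f y ∂μ‖ ≤ ∫ y in s, C * ‖f y‖ ∂μ := by
        refine norm_integral_le_of_norm_le (hf.norm.restrict.const_mul C) ?_
        filter_upwards [ae_restrict_mem hs] with y hy
        rw [norm_mul]
        gcongr
        exact hg y hy
    _ = C * ∫ y in s, ‖f y‖ ∂μ := integral_const_mul C _
    _ ≤ C * ∫ y, ‖f y‖ ∂μ :=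
        mul_le_mul_of_nonneg_left
          (setIntegral_le_integral hf.norm (Eventually.of_forall fun y => norm_nonneg _)) hC

/-- The key estimate in the far field expansion: for `f ∈ L¹` supported in the closed ball of
radius `R` and `|x| ≥ 2R`, replacing `e^{i|x-y|}|x-y|^{-(N-1)/2}` by
`e^{i(|x| - x̂·y)}|x|^{-(N-1)/2}` produces an error of order `‖f‖₁ |x|^{-(N+1)/2}`. -/
theorem far_field_kernel_replacement (N : ℕ) (hN : 2 ≤ N) (R : ℝ) (hR : 0 < R) :
    ∃ κ : ℝ, 0 < κ ∧
      ∀ f : EuclideanSpace ℝ (Fin N) → ℂ, Integrable f volume →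
        Function.support f ⊆ Metric.closedBall (0 : EuclideanSpace ℝ (Fin N)) R →
        ∀ x : EuclideanSpace ℝ (Fin N), 2 * R ≤ ‖x‖ →
          ‖(∫ y in Metric.ball (0 : EuclideanSpace ℝ (Fin N)) R,
              (Complex.exp (Complex.I * (‖x - y‖ : ℝ)) *
                  ((‖x - y‖ ^ (-(((N : ℝ) - 1) / 2)) : ℝ) : ℂ) -
                Complex.exp (Complex.I * ((‖x‖ - ⟪‖x‖⁻¹ • x, y⟫ : ℝ) : ℂ)) *
                  ((‖x‖ ^ (-(((N : ℝ) - 1) / 2)) : ℝ) : ℂ)) * f y)‖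
            ≤ κ * (∫ y, ‖f y‖) * ‖x‖ ^ (-(((N : ℝ) + 1) / 2)) := by
  have hα : 0 ≤ ((N : ℝ) - 1) / 2 := by
    have : (2 : ℝ) ≤ N := by exact_mod_cast hN
    linarith
  set α : ℝ := ((N : ℝ) - 1) / 2
  have hexponent : -(((N : ℝ) + 1) / 2) = -α - 1 := by ring
  refine ⟨α * 2 ^ (α + 1) * R + R ^ 2, by positivity, fun f hf _ x hx => ?_⟩
  have hx0 : x ≠ 0 := norm_pos_iff.mp (by linarith)
  rw [hexponent, mul_right_comm]
  refine norm_setIntegral_mul_le_of_norm_le hf measurableSet_ball (by positivity) fun y hy => ?_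
  have hyR : ‖y‖ ≤ R := (mem_ball_zero_iff.mp hy).le
  refine (norm_exp_mul_rpow_sub_exp_mul_rpow_le hα hx0 (by linarith)).trans ?_
  gcongr
end

section
/- Let N ≥ 1, 1 < p < ∞, p' = p/(p-1), and let T : L^{p'}(ℝ^N; ℝ) → L^p(ℝ^N; ℝ) be a bounded linear operator. Let Q ∈ L^∞(ℝ^N) be nonnegative a.e. with ess sup_{|x|≥R} Q(x) → 0 as R → ∞. Suppose that for every bounded measurable set B ⊂ ℝ^N the operator v ↦ 1_B · Q^{1/p} · T(Q^{1/p} v) is compact from L^{p'}(ℝ^N) to L^p(ℝ^N). Then the operator v ↦ Q^{1/p} · T(Q^{1/p} v) is compact from L^{p'}(ℝ^N) to L^p(ℝ^N). -/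
/-!
Write `g = Q^{1/p} ∈ L^∞`, so that the operator is `M_g T M_g` with `M_φ` the multiplication by `φ`.
Cutting the left weight off outside the ball `B_R` gives the operators `M_{1_{B_R} g} T M_g`, which
are compact by hypothesis, and `‖M_g T M_g - M_{1_{B_R} g} T M_g‖ ≤ ‖1_{B_Rᶜ} g‖_∞ ‖T M_g‖`,
which tends to `0` as `R → ∞` by the decay of `Q`. Compact operators are closed in operator norm.
-/

open MeasureTheory Metric
open scoped ENNReal

namespace MeasureTheory

variable {α E : Type*} [MeasurableSpace α] {μ : Measure α} [NormedAddCommGroup E]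

theorem MemLp.exists_ae_norm_le {f : α → E} (hf : MemLp f ∞ μ) : ∃ C, ∀ᵐ x ∂μ, ‖f x‖ ≤ C := by
  rw [MemLp, eLpNorm_exponent_top, eLpNormEssSup_lt_top_iff_isBoundedUnder] at hf
  obtain ⟨C, hC⟩ := hf.2
  exact ⟨C, hC⟩

theorem MemLp.rpow_const_top {f : α → ℝ} (hf : MemLp f ∞ μ) {r : ℝ} (hr : 0 ≤ r) :
    MemLp (fun x => f x ^ r) ∞ μ := by
  obtain ⟨C, hC⟩ := hf.exists_ae_norm_le
  refine memLp_top_of_bound ((Real.continuous_rpow_const hr).comp_aestronglyMeasurable hf.1)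
    (C ^ r) ?_
  filter_upwards [hC] with x hx
  exact (Real.abs_rpow_le_abs_rpow _ _).trans (Real.rpow_le_rpow (abs_nonneg _) hx hr)

namespace Lp

theorem norm_le_of_ae_bound_top {f : Lp E ∞ μ} {C : ℝ} (hC : 0 ≤ C) (hf : ∀ᵐ x ∂μ, ‖f x‖ ≤ C) :
    ‖f‖ ≤ C := by
  rw [norm_def, eLpNorm_exponent_top]
  exact ENNReal.toReal_le_of_le_ofReal hC (eLpNormEssSup_le_of_ae_bound hf)

theorem norm_toLp_sub_indicator_le {f : α → E} (hf : MemLp f ∞ μ) {B : Set α}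
    (hB : MeasurableSet B) {η : ℝ} (hη : 0 ≤ η) (h : ∀ᵐ x ∂μ, x ∉ B → ‖f x‖ ≤ η) :
    ‖hf.toLp f - (hf.indicator hB).toLp (B.indicator f)‖ ≤ η := by
  refine norm_le_of_ae_bound_top hη ?_
  filter_upwards [coeFn_sub (hf.toLp f) ((hf.indicator hB).toLp (B.indicator f)), hf.coeFn_toLp,
    (hf.indicator hB).coeFn_toLp, h] with x hsub hf' hfB hx
  rw [hsub, Pi.sub_apply, hf', hfB]
  by_cases hxB : x ∈ B
  · simpa [hxB] using hη
  · simpa [hxB] using hx hxB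

variable [NormedSpace ℝ E] {q : ℝ≥0∞} [Fact (1 ≤ q)]

noncomputable def mulCLM (φ : Lp ℝ ∞ μ) : Lp E q μ →L[ℝ] Lp E q μ :=
  (ContinuousLinearMap.lsmul ℝ ℝ).holderL μ ∞ q q φ

theorem coeFn_mulCLM (φ : Lp ℝ ∞ μ) (f : Lp E q μ) :
    ⇑(mulCLM φ f) =ᵐ[μ] fun x => φ x • f x :=
  ContinuousLinearMap.coeFn_holder _ _ _

theorem mulCLM_sub (φ ψ : Lp ℝ ∞ μ) :
    (mulCLM (φ - ψ) : Lp E q μ →L[ℝ] Lp E q μ) = mulCLM φ - mulCLM ψ :=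
  map_sub _ _ _

theorem norm_mulCLM_le (φ : Lp ℝ ∞ μ) : ‖(mulCLM φ : Lp E q μ →L[ℝ] Lp E q μ)‖ ≤ ‖φ‖ :=
  (ContinuousLinearMap.le_opNorm _ φ).trans <| mul_le_of_le_one_left (norm_nonneg φ) <|
    (ContinuousLinearMap.norm_holderL_le _).trans ContinuousLinearMap.opNorm_lsmul_le

theorem isCompactOperator_mulCLM_comp_of_approx [CompleteSpace E] {X : Type*}
    [NormedAddCommGroup X] [NormedSpace ℝ X] (A : X →L[ℝ] Lp E q μ) (φ : Lp ℝ ∞ μ)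
    (h : ∀ η > 0, ∃ ψ : Lp ℝ ∞ μ, ‖φ - ψ‖ ≤ η ∧ IsCompactOperator (mulCLM ψ ∘L A)) :
    IsCompactOperator (mulCLM φ ∘L A) := by
  refine isClosed_setOfPred_isCompactOperator.closure_subset <|
    Metric.mem_closure_iff.2 fun ε hε => ?_
  obtain ⟨ψ, hψ, hψA⟩ := h (ε / (‖A‖ + 1)) (by positivity)
  refine ⟨_, hψA, ?_⟩
  rw [_root_.dist_eq_norm, ← ContinuousLinearMap.sub_comp, ← mulCLM_sub]
  calc ‖mulCLM (φ - ψ) ∘L A‖ ≤ ‖φ - ψ‖ * ‖A‖ :=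
        (ContinuousLinearMap.opNorm_comp_le _ _).trans
          (mul_le_mul_of_nonneg_right (norm_mulCLM_le _) (norm_nonneg A))
    _ ≤ ε / (‖A‖ + 1) * ‖A‖ := mul_le_mul_of_nonneg_right hψ (norm_nonneg A)
    _ < ε := by
        rw [div_mul_eq_mul_div, div_lt_iff₀ (by positivity)]
        nlinarith [norm_nonneg A]

theorem coeFn_mulCLM_toLp {f : α → ℝ} (hf : MemLp f ∞ μ) (u : Lp E q μ) :
    ⇑(mulCLM (hf.toLp f) u) =ᵐ[μ] fun x => f x • u x := by
  filter_upwards [coeFn_mulCLM (hf.toLp f) u, hf.coeFn_toLp] with x hx hfx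
  rw [hx, hfx]

end Lp

end MeasureTheory

theorem birman_schwinger_compact_general (N : ℕ) (p p' : ℝ)
    [Fact ((1 : ℝ≥0∞) ≤ ENNReal.ofReal p)] [Fact ((1 : ℝ≥0∞) ≤ ENNReal.ofReal p')]
    (T : Lp ℝ (ENNReal.ofReal p') (volume : Measure (EuclideanSpace ℝ (Fin N))) →L[ℝ]
      Lp ℝ (ENNReal.ofReal p) (volume : Measure (EuclideanSpace ℝ (Fin N))))
    (Q : EuclideanSpace ℝ (Fin N) → ℝ)
    (hQmem : MemLp Q ⊤ (volume : Measure (EuclideanSpace ℝ (Fin N))))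
    (hQnonneg : ∀ᵐ x ∂(volume : Measure (EuclideanSpace ℝ (Fin N))), 0 ≤ Q x)
    (hQdecay : ∀ ε : ℝ, 0 < ε → ∃ R : ℝ,
      ∀ᵐ x ∂(volume : Measure (EuclideanSpace ℝ (Fin N))), R ≤ ‖x‖ → Q x ≤ ε)
    (hloc : ∀ B : Set (EuclideanSpace ℝ (Fin N)), MeasurableSet B → Bornology.IsBounded B →
      ∀ S : Lp ℝ (ENNReal.ofReal p') (volume : Measure (EuclideanSpace ℝ (Fin N))) →L[ℝ]
        Lp ℝ (ENNReal.ofReal p) (volume : Measure (EuclideanSpace ℝ (Fin N))),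
        (∀ v w : Lp ℝ (ENNReal.ofReal p')
            (volume : Measure (EuclideanSpace ℝ (Fin N))),
          (⇑w =ᵐ[volume] fun x => Q x ^ (1 / p) * v x) →
          ⇑(S v) =ᵐ[volume] fun x =>
            B.indicator (fun _ => (1 : ℝ)) x * (Q x ^ (1 / p) * T w x)) →
        IsCompactOperator ⇑S) :
    ∀ S : Lp ℝ (ENNReal.ofReal p') (volume : Measure (EuclideanSpace ℝ (Fin N))) →L[ℝ]
      Lp ℝ (ENNReal.ofReal p) (volume : Measure (EuclideanSpace ℝ (Fin N))),
      (∀ v w : Lp ℝ (ENNReal.ofReal p')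
          (volume : Measure (EuclideanSpace ℝ (Fin N))),
        (⇑w =ᵐ[volume] fun x => Q x ^ (1 / p) * v x) →
        ⇑(S v) =ᵐ[volume] fun x => Q x ^ (1 / p) * T w x) →
      IsCompactOperator ⇑S := by
  intro S hS
  have hp : 0 < p := zero_lt_one.trans_le (ENNReal.one_le_ofReal.mp Fact.out)
  have hg : MemLp (fun x => Q x ^ (1 / p)) ∞ volume := hQmem.rpow_const_top (by positivity)
  set G := hg.toLp _
  have hG_apply : ∀ v w : Lp ℝ (ENNReal.ofReal p') volume,
      (⇑w =ᵐ[volume] fun x => Q x ^ (1 / p) * v x) → Lp.mulCLM G v = w := fun v w hw =>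
    Lp.ext ((Lp.coeFn_mulCLM_toLp hg v).trans hw.symm)
  have hS_eq : S = Lp.mulCLM G ∘L (T ∘L Lp.mulCLM G) := by
    ext1 v
    exact Lp.ext ((hS v _ (Lp.coeFn_mulCLM_toLp hg v)).trans (Lp.coeFn_mulCLM_toLp hg _).symm)
  rw [hS_eq]
  refine Lp.isCompactOperator_mulCLM_comp_of_approx _ G fun η hη => ?_
  obtain ⟨R, hR⟩ := hQdecay (η ^ p) (by positivity)
  have hB : MeasurableSet (closedBall (0 : EuclideanSpace ℝ (Fin N)) R) := measurableSet_closedBall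
  refine ⟨(hg.indicator hB).toLp _, Lp.norm_toLp_sub_indicator_le hg hB hη.le ?_,
    hloc _ hB isBounded_closedBall _ fun v w hw => ?_⟩
  · filter_upwards [hR, hQnonneg] with x hx hQx hxB
    rw [mem_closedBall_zero_iff, not_le] at hxB
    rw [Real.norm_of_nonneg (by positivity), one_div,
      Real.rpow_inv_le_iff_of_pos hQx hη.le hp]
    exact hx hxB.le
  · rw [ContinuousLinearMap.comp_apply, ContinuousLinearMap.comp_apply, hG_apply v w hw]
    filter_upwards [Lp.coeFn_mulCLM_toLp (hg.indicator hB) (T w)] with x hx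
    rw [hx]
    by_cases hxB : x ∈ closedBall 0 R <;> simp [hxB]

/-- Compactness of the Birman-Schwinger type operator `v ↦ Q^{1/p}·T(Q^{1/p}v)` when `Q ∈ L^∞`
is nonnegative with `ess sup_{|x|≥R} Q → 0` as `R → ∞`, assuming that all its truncations
`v ↦ 1_B·Q^{1/p}·T(Q^{1/p}v)` to bounded measurable sets `B` are compact. Operators are
characterized through almost-everywhere representatives. -/
theorem birman_schwinger_compact (N : ℕ) (hN : 1 ≤ N) (p p' : ℝ)
    (hp : 1 < p) (hp' : p' = p / (p - 1))
    [Fact ((1 : ℝ≥0∞) ≤ ENNReal.ofReal p)] [Fact ((1 : ℝ≥0∞) ≤ ENNReal.ofReal p')]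
    (T : Lp ℝ (ENNReal.ofReal p') (volume : Measure (EuclideanSpace ℝ (Fin N))) →L[ℝ]
      Lp ℝ (ENNReal.ofReal p) (volume : Measure (EuclideanSpace ℝ (Fin N))))
    (Q : EuclideanSpace ℝ (Fin N) → ℝ)
    (hQmem : MemLp Q ⊤ (volume : Measure (EuclideanSpace ℝ (Fin N))))
    (hQnonneg : ∀ᵐ x ∂(volume : Measure (EuclideanSpace ℝ (Fin N))), 0 ≤ Q x)
    (hQdecay : ∀ ε : ℝ, 0 < ε → ∃ R : ℝ,
      ∀ᵐ x ∂(volume : Measure (EuclideanSpace ℝ (Fin N))), R ≤ ‖x‖ → Q x ≤ ε)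
    (hloc : ∀ B : Set (EuclideanSpace ℝ (Fin N)), MeasurableSet B → Bornology.IsBounded B →
      ∀ S : Lp ℝ (ENNReal.ofReal p') (volume : Measure (EuclideanSpace ℝ (Fin N))) →L[ℝ]
        Lp ℝ (ENNReal.ofReal p) (volume : Measure (EuclideanSpace ℝ (Fin N))),
        (∀ v w : Lp ℝ (ENNReal.ofReal p')
            (volume : Measure (EuclideanSpace ℝ (Fin N))),
          (⇑w =ᵐ[volume] fun x => Q x ^ (1 / p) * v x) →
          ⇑(S v) =ᵐ[volume] fun x =>
            B.indicator (fun _ => (1 : ℝ)) x * (Q x ^ (1 / p) * T w x)) →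
        IsCompactOperator ⇑S) :
    ∀ S : Lp ℝ (ENNReal.ofReal p') (volume : Measure (EuclideanSpace ℝ (Fin N))) →L[ℝ]
      Lp ℝ (ENNReal.ofReal p) (volume : Measure (EuclideanSpace ℝ (Fin N))),
      (∀ v w : Lp ℝ (ENNReal.ofReal p')
          (volume : Measure (EuclideanSpace ℝ (Fin N))),
        (⇑w =ᵐ[volume] fun x => Q x ^ (1 / p) * v x) →
        ⇑(S v) =ᵐ[volume] fun x => Q x ^ (1 / p) * T w x) →
      IsCompactOperator ⇑S :=
  birman_schwinger_compact_general N p p' T Q hQmem hQnonneg hQdecay hloc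
end
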